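/- Let ω be a closed 2-form on ℝ^{2n} (so ∂_l ω_{jk} + ∂_j ω_{kl} + ∂_k ω_{lj} = 0 at every point), let β be a Riemannian metric (symmetric positive-definite bilinear form field) and define J^k_j = ω_{jl} β^{lk}, assuming J² = -1 pointwise. Then at any point where β_{ij} = δ_{ij} in the chosen coordinates, the divergence of J vanishes: ∑_l ∂_l J_j^l = 0 for every j, provided also ∂β = 0 at that point (normal coordinates). -/

import Mathlib

open Matrix
/-- Partial derivative of a scalar field on `ℝ^N` in the `l`-th coordinate direction. -/
noncomputable def pder {N : ℕ} (l : Fin N) (f : (Fin N → ℝ) → ℝ) (x : Fin N → ℝ) : ℝ :=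
  fderiv ℝ f x (Pi.single l 1)

/-!
At `x₀` we have `J = ω` and, because `∂β = 0` there, `∂J = ∂ω`. Differentiating `J² = -1`
shows that every `∂_a ω` anticommutes with `ω`, hence `tr (ω ∂_a ω) = 0`. With `dω = 0` this
forces `∑_{a,m} ω_{am} ∂_a ω_{mk} = 0`, and summing the anticommutation relation along the
diagonal then gives `u ω = 0` for `u_m = ∑_a ∂_a ω_{am}`. As `ω² = -1`, `u = 0`, and `u` is
minus the divergence of `J` at `x₀`.
-/

namespace Matrix

section Algebra

variable {R : Type*} [CommRing R] [NoZeroDivisors R] [CharZero R] {ι : Type*} [Fintype ι]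

theorem trace_mul_eq_zero_of_anticommute {A B : Matrix ι ι R} (h : A * B + B * A = 0) :
    trace (A * B) = 0 := by
  have h := congr_arg trace h
  rwa [trace_add, trace_mul_comm B A, trace_zero, add_self_eq_zero] at h

theorem sum_mul_eq_zero_of_anticommute {A B : Matrix ι ι R} (hB : Bᵀ = -B)
    (h : A * B + B * A = 0) : ∑ i, ∑ m, A i m * B i m = 0 := by
  have htr : ∑ i, ∑ m, A i m * B i m = trace (A * Bᵀ) := by simp [trace, mul_apply]
  rw [htr, hB, mul_neg, trace_neg, trace_mul_eq_zero_of_anticommute h, neg_zero]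

variable {W : Matrix ι ι R} {D : ι → Matrix ι ι R}

theorem sum_mul_apply_eq_zero_of_cyclic (hW : Wᵀ = -W) (hD : ∀ a, (D a)ᵀ = -D a)
    (hDW : ∀ a, D a * W + W * D a = 0) (hcyc : ∀ a j k, D a j k + D j k a + D k a j = 0)
    (k : ι) : ∑ a, (W * D a) a k = 0 := by
  have hW' (a m : ι) : W m a = -W a m := by simpa using congr_fun₂ hW a m
  have hD' (a m : ι) : D a k m = -D a m k := by simpa using congr_fun₂ (hD a) m k
  -- `dω = 0` splits each term into two: the first reproduces the sum, the second is a trace.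
  have hsplit : ∑ a, (W * D a) a k = ∑ a, ∑ m, W a m * (-D m k a - D k a m) := by
    simp only [mul_apply]
    congr! 2 with a _ m
    linear_combination W a m * hcyc a m k
  have hswap : ∑ a, ∑ m, W a m * D m k a = ∑ a, (W * D a) a k := by
    rw [Finset.sum_comm]
    refine Finset.sum_congr rfl fun a _ => Finset.sum_congr rfl fun m _ => ?_
    rw [hW' a m, hD' a m, neg_mul_neg]
  have htrace : ∑ a, ∑ m, W a m * D k a m = 0 :=
    sum_mul_eq_zero_of_anticommute (hD k) ((add_comm _ _).trans (hDW k))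
  refine self_eq_neg.mp (hsplit.trans ?_)
  simp only [mul_sub, mul_neg, Finset.sum_sub_distrib, Finset.sum_neg_distrib, hswap, htrace,
    sub_zero]

theorem sum_diag_eq_zero_of_cyclic [DecidableEq ι] (hW : Wᵀ = -W) (hWW : W * W = -1)
    (hD : ∀ a, (D a)ᵀ = -D a) (hDW : ∀ a, D a * W + W * D a = 0)
    (hcyc : ∀ a j k, D a j k + D j k a + D k a j = 0) (j : ι) : ∑ a, D a a j = 0 := by
  set u : ι → R := fun m => ∑ a, D a a m
  have hu : u ᵥ* W = 0 := by
    ext k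
    have h := congr_arg (fun M : ι → Matrix ι ι R => ∑ a, M a a k) (funext hDW)
    simp only [add_apply, Finset.sum_add_distrib, sum_mul_apply_eq_zero_of_cyclic hW hD hDW hcyc,
      add_zero, zero_apply, Finset.sum_const_zero] at h
    rw [Pi.zero_apply, ← h]
    simp only [vecMul, dotProduct, u, Finset.sum_mul, mul_apply]
    exact Finset.sum_comm
  have hneg : -u = 0 := by
    rw [← vecMul_one u, ← vecMul_neg, ← hWW, ← vecMul_vecMul, hu, zero_vecMul]
  exact congr_fun (neg_eq_zero.mp hneg) j

end Algebra

section Differentiability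

variable {𝕜 : Type*} [NontriviallyNormedField 𝕜] {E : Type*} [NormedAddCommGroup E]
  [NormedSpace 𝕜 E] {ι κ μ : Type*}

theorem differentiable_mul_apply [Fintype κ] {A : E → Matrix ι κ 𝕜} {B : E → Matrix κ μ 𝕜}
    (hA : ∀ i j, Differentiable 𝕜 (fun x => A x i j))
    (hB : ∀ i j, Differentiable 𝕜 (fun x => B x i j)) (i : ι) (k : μ) :
    Differentiable 𝕜 (fun x => (A x * B x) i k) := by
  simp only [mul_apply]
  fun_prop

variable [Fintype ι] [DecidableEq ι] {A : E → Matrix ι ι 𝕜}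

theorem differentiable_det (hA : ∀ i j, Differentiable 𝕜 (fun x => A x i j)) :
    Differentiable 𝕜 (fun x => (A x).det) := by
  simp only [det_apply]
  fun_prop

theorem differentiable_adjugate_apply (hA : ∀ i j, Differentiable 𝕜 (fun x => A x i j))
    (i j : ι) : Differentiable 𝕜 (fun x => (A x).adjugate i j) := by
  simp only [adjugate_apply]
  refine differentiable_det fun k l => ?_
  simp only [updateRow_apply]
  split_ifs <;> fun_prop

theorem differentiable_inv_apply (hA : ∀ i j, Differentiable 𝕜 (fun x => A x i j))
    (hdet : ∀ x, (A x).det ≠ 0) (i j : ι) : Differentiable 𝕜 (fun x => (A x)⁻¹ i j) := by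
  simp only [inv_def, smul_apply, Ring.inverse_eq_inv, smul_eq_mul]
  exact ((differentiable_det hA).inv hdet).mul (differentiable_adjugate_apply hA i j)

end Differentiability

end Matrix

section PartialDerivative

variable {N : ℕ} {ι κ μ : Type*}

noncomputable def pderMatrix (l : Fin N) (A : (Fin N → ℝ) → Matrix ι κ ℝ) (x : Fin N → ℝ) :
    Matrix ι κ ℝ :=
  of fun i j => pder l (fun y => A y i j) x

variable {l : Fin N} {x : Fin N → ℝ}

@[simp]
theorem pderMatrix_apply (A : (Fin N → ℝ) → Matrix ι κ ℝ) (i : ι) (j : κ) :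
    pderMatrix l A x i j = pder l (fun y => A y i j) x :=
  rfl

theorem pderMatrix_const (C : Matrix ι κ ℝ) : pderMatrix l (fun _ => C) x = 0 := by
  ext
  simp [pder]

theorem pderMatrix_neg (A : (Fin N → ℝ) → Matrix ι κ ℝ) :
    pderMatrix l (fun y => -A y) x = -pderMatrix l A x := by
  ext
  simp [pder, fderiv_fun_neg]

theorem pderMatrix_transpose (A : (Fin N → ℝ) → Matrix ι κ ℝ) :
    pderMatrix l (fun y => (A y)ᵀ) x = (pderMatrix l A x)ᵀ :=
  rfl

theorem pderMatrix_mul [Fintype κ] {A : (Fin N → ℝ) → Matrix ι κ ℝ}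
    {B : (Fin N → ℝ) → Matrix κ μ ℝ}
    (hA : ∀ i j, DifferentiableAt ℝ (fun y => A y i j) x)
    (hB : ∀ i j, DifferentiableAt ℝ (fun y => B y i j) x) :
    pderMatrix l (fun y => A y * B y) x = pderMatrix l A x * B x + A x * pderMatrix l B x := by
  ext i k
  simp only [pderMatrix_apply, pder, Matrix.mul_apply, Matrix.add_apply,
    fderiv_fun_sum fun m _ => (hA i m).fun_mul (hB m k), _root_.sum_apply,
    fderiv_fun_mul (hA _ _) (hB _ _), _root_.add_apply, _root_.smul_apply, smul_eq_mul,
    ← Finset.sum_add_distrib]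
  exact Finset.sum_congr rfl fun m _ => by ring

end PartialDerivative

/-- Divergence-free property of the almost complex structure `J = ω β⁻¹` at a point where
`β = δ` and `∂β = 0`, given `dω = 0` and `J² = -1`. -/
theorem stmt_3 (n : ℕ) (x₀ : Fin (2 * n) → ℝ)
    (om β J : (Fin (2 * n) → ℝ) → Matrix (Fin (2 * n)) (Fin (2 * n)) ℝ)
    (homdiff : ∀ i j, Differentiable ℝ (fun x => om x i j))
    (hβdiff : ∀ i j, Differentiable ℝ (fun x => β x i j))
    (hanti : ∀ x, (om x)ᵀ = -(om x))
    (hclosed : ∀ x (l j k : Fin (2 * n)),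
      pder l (fun y => om y j k) x + pder j (fun y => om y k l) x
        + pder k (fun y => om y l j) x = 0)
    (hβpos : ∀ x, (β x).PosDef)
    (hβ0 : β x₀ = 1)
    (hdβ : ∀ (l i j : Fin (2 * n)), pder l (fun y => β y i j) x₀ = 0)
    (hJ : ∀ x, J x = om x * (β x)⁻¹)
    (hJ2 : ∀ x, J x * J x = -1) :
    ∀ j : Fin (2 * n), ∑ l, pder l (fun y => J y j l) x₀ = 0 := by
  intro j
  have hdet (x) : (β x).det ≠ 0 := (hβpos x).det_pos.ne'
  have hJdiff (i k) : DifferentiableAt ℝ (fun x => J x i k) x₀ := by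
    simp only [hJ]
    exact differentiable_mul_apply homdiff (differentiable_inv_apply hβdiff hdet) i k x₀
  have hJ0 : J x₀ = om x₀ := by rw [hJ, hβ0, inv_one, mul_one]
  have hdJ (l) : pderMatrix l J x₀ = pderMatrix l om x₀ := by
    have hJβ : (fun x => J x * β x) = om := funext fun x => by
      rw [hJ, Matrix.mul_assoc, nonsing_inv_mul _ (isUnit_iff_ne_zero.mpr (hdet x)), mul_one]
    have hdβ' : pderMatrix l β x₀ = 0 := by
      ext i k
      exact hdβ l i k
    rw [← hJβ, pderMatrix_mul hJdiff fun i k => (hβdiff i k).differentiableAt, hβ0, hdβ',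
      mul_zero, add_zero, mul_one]
  have hanticomm (l) : pderMatrix l om x₀ * om x₀ + om x₀ * pderMatrix l om x₀ = 0 := by
    rw [← hdJ, ← hJ0, ← pderMatrix_mul hJdiff hJdiff, funext hJ2, pderMatrix_const]
  have hdom (l) : (pderMatrix l om x₀)ᵀ = -pderMatrix l om x₀ := by
    rw [← pderMatrix_transpose, funext hanti, pderMatrix_neg]
  have hdiv := sum_diag_eq_zero_of_cyclic (hanti x₀) (hJ0 ▸ hJ2 x₀) hdom hanticomm (hclosed x₀) j
  calc ∑ l, pder l (fun y => J y j l) x₀ = ∑ l, -pderMatrix l om x₀ l j := by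
        refine Finset.sum_congr rfl fun l _ => ?_
        rw [← pderMatrix_apply, hdJ, ← neg_apply, ← hdom, transpose_apply]
    _ = 0 := by rw [Finset.sum_neg_distrib, hdiv, neg_zero]
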